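/- arXiv:1508.01442 — 2 statements merged into one kernel-verified Lean document; each statement's English description precedes it below -/
import Mathlib

section
/- Uniqueness of the Lawrence-Sullivan interval: let $(\widehat{\mathbb L}(a,b,x),\partial')$ be a complete free DGL with $|a|=|b|=-1$, $|x|=0$, in which $a$ and $b$ are Maurer-Cartan elements and the linear part of the differential satisfies $\partial_1' x = b-a$. Then the quadratic part of the differential of $x$ is forced to be $\partial_2' x = \tfrac12 [x, a+b]$. -/
/-- A differential graded Lie algebra over `ℚ`, presented as a `ℚ`-module with an
internal `ℤ`-grading given by submodules (in the applications it is moreover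
complete, i.e. an inverse limit of nilpotent quotients). -/
structure DGLA where
  L : Type
  [acg : AddCommGroup L]
  [mod : Module ℚ L]
  grade : ℤ → Submodule ℚ L
  grade_spans : (⨆ i : ℤ, grade i) = ⊤
  br : L →ₗ[ℚ] L →ₗ[ℚ] L
  d : L →ₗ[ℚ] L
  grade_br : ∀ (i j : ℤ) (x y : L), x ∈ grade i → y ∈ grade j → br x y ∈ grade (i + j)
  grade_d : ∀ (i : ℤ) (x : L), x ∈ grade i → d x ∈ grade (i - 1)
  antisymm : ∀ (i j : ℤ) (x y : L), x ∈ grade i → y ∈ grade j →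
      br x y = -((-1 : ℚ) ^ (i * j).natAbs) • br y x
  jacobi : ∀ (i j k : ℤ) (x y z : L), x ∈ grade i → y ∈ grade j → z ∈ grade k →
      ((-1 : ℚ) ^ (i * k).natAbs) • br x (br y z)
        + ((-1 : ℚ) ^ (j * i).natAbs) • br y (br z x)
        + ((-1 : ℚ) ^ (k * j).natAbs) • br z (br x y) = 0
  leibniz : ∀ (i : ℤ) (x y : L), x ∈ grade i →
      d (br x y) = br (d x) y + ((-1 : ℚ) ^ i.natAbs) • br x (d y)
  dd : ∀ x : L, d (d x) = 0

attribute [instance] DGLA.acg DGLA.mod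


/-- Uniqueness of the Lawrence–Sullivan interval: let `(𝕃̂(a,b,x), ∂')` be a complete
free DGL with `|a| = |b| = -1`, `|x| = 0`, in which `a` and `b` are Maurer-Cartan
elements and the linear part of the differential satisfies `∂₁'x = b - a`.  Then the
quadratic part of the differential of `x` is forced to be `∂₂'x = ½ [x, a + b]`.

The free complete Lie algebra `𝕃̂(a,b,x)` is presented through its bracket-length
decomposition: `ℓ n` is the space of elements of bracket length `n`, `P n` the
projection onto it, and the freeness of the underlying Lie algebra is encoded by the
stated spanning and linear-independence properties of the low-length pieces. -/
theorem lawrence_sullivan_quadratic_part_unique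
    (G : DGLA)
    (ℓ : ℕ → Submodule ℚ G.L) (P : ℕ → (G.L →ₗ[ℚ] G.L))
    (hPmem : ∀ (n : ℕ) (u : G.L), P n u ∈ ℓ n)
    (hPid : ∀ n : ℕ, ∀ u ∈ ℓ n, P n u = u)
    (hPzero : ∀ m n : ℕ, m ≠ n → ∀ u ∈ ℓ m, P n u = 0)
    (hPgrade : ∀ (n : ℕ) (i : ℤ) (u : G.L), u ∈ G.grade i → P n u ∈ G.grade i)
    (hbrlen : ∀ (m n : ℕ) (u v : G.L), u ∈ ℓ m → v ∈ ℓ n → G.br u v ∈ ℓ (m + n))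
    (a b x : G.L)
    (ha1 : a ∈ ℓ 1) (hb1 : b ∈ ℓ 1) (hx1 : x ∈ ℓ 1)
    (ha : a ∈ G.grade (-1)) (hb : b ∈ G.grade (-1)) (hx : x ∈ G.grade 0)
    (hMCa : G.d a = -((1 / 2 : ℚ) • G.br a a))
    (hMCb : G.d b = -((1 / 2 : ℚ) • G.br b b))
    (hd1x : P 1 (G.d x) = b - a)
    -- the part of `∂x` of bracket length at least 3:
    (Lge3 : Submodule ℚ G.L)
    (hTail : G.d x - P 1 (G.d x) - P 2 (G.d x) ∈ Lge3)
    (hLge3 : ∀ u ∈ Lge3, P 1 u = 0 ∧ P 2 u = 0 ∧ P 2 (G.d u) = 0)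
    -- on brackets of generators, the length-two part of `∂` only involves the
    -- linear part `∂₁` of the differential:
    (hder1 : ∀ u v : G.L, u ∈ ℓ 1 → v ∈ ℓ 1 → u ∈ G.grade 0 →
      P 2 (G.d (G.br u v)) = G.br (P 1 (G.d u)) v + G.br u (P 1 (G.d v)))
    -- the degree `-1`, bracket-length `2` part of `𝕃̂(a,b,x)` is spanned by
    -- `[x,a]` and `[x,b]`:
    (hspan : ∀ u : G.L, u ∈ ℓ 2 → u ∈ G.grade (-1) →
      u ∈ Submodule.span ℚ ({G.br x a, G.br x b} : Set G.L))
    (hindep : LinearIndependent ℚ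
      ![G.br x a, G.br x b, G.br a a, G.br b b, G.br a b]) :
    P 2 (G.d x) = (1 / 2 : ℚ) • G.br x (a + b) := by

  classical
  have hdxg : G.d x ∈ G.grade (-1) := by
    have := G.grade_d 0 x hx; simpa using this
  have hy2 : P 2 (G.d x) ∈ ℓ 2 := hPmem 2 _
  have hyg : P 2 (G.d x) ∈ G.grade (-1) := hPgrade 2 _ _ hdxg
  obtain ⟨α, β, hαβ⟩ := Submodule.mem_span_pair.mp (hspan _ hy2 hyg)
  have haa2 : G.br a a ∈ ℓ 2 := hbrlen 1 1 a a ha1 ha1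
  have hbb2 : G.br b b ∈ ℓ 2 := hbrlen 1 1 b b hb1 hb1
  have hP1da : P 1 (G.d a) = 0 := by
    rw [hMCa, map_neg, map_smul, hPzero 2 1 (by norm_num) _ haa2]; simp
  have hP1db : P 1 (G.d b) = 0 := by
    rw [hMCb, map_neg, map_smul, hPzero 2 1 (by norm_num) _ hbb2]; simp
  have hba : G.br b a = G.br a b := by
    have := G.antisymm (-1) (-1) b a hb ha
    norm_num at this
    exact this
  have hxa : P 2 (G.d (G.br x a)) = G.br a b - G.br a a := by
    rw [hder1 x a hx1 ha1 hx, hd1x, hP1da]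
    simp [map_sub, LinearMap.sub_apply, hba]
  have hxb : P 2 (G.d (G.br x b)) = G.br b b - G.br a b := by
    rw [hder1 x b hx1 hb1 hx, hd1x, hP1db]
    simp [map_sub, LinearMap.sub_apply]
  have hP2dt : P 2 (G.d (G.d x - P 1 (G.d x) - P 2 (G.d x))) = 0 :=
    (hLge3 _ hTail).2.2
  have hP2dy : P 2 (G.d (P 2 (G.d x)))
      = α • (G.br a b - G.br a a) + β • (G.br b b - G.br a b) := by
    rw [← hαβ, map_add, map_smul, map_smul, map_add, map_smul, map_smul, hxa, hxb]
  have hP2dba : P 2 (G.d (P 1 (G.d x)))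
      = -((1/2 : ℚ) • G.br b b) + (1/2 : ℚ) • G.br a a := by
    rw [hd1x, map_sub, hMCa, hMCb, map_sub, map_neg, map_neg, map_smul, map_smul,
      hPid 2 _ haa2, hPid 2 _ hbb2]
    abel
  have key : α • (G.br a b - G.br a a) + β • (G.br b b - G.br a b)
      + (-((1/2 : ℚ) • G.br b b) + (1/2 : ℚ) • G.br a a) = 0 := by
    have h0 : P 2 (G.d (G.d x)) = 0 := by rw [G.dd]; simp
    have := hP2dt
    rw [map_sub, map_sub, map_sub, map_sub, h0, hP2dy, hP2dba] at this
    linear_combination (norm := module) -this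
  have hind := Fintype.linearIndependent_iff.mp hindep
    ![0, 0, (1/2 : ℚ) - α, β - 1/2, α - β]
  have hsum : ∑ i : Fin 5, (![0, 0, (1/2 : ℚ) - α, β - 1/2, α - β]) i •
      (![G.br x a, G.br x b, G.br a a, G.br b b, G.br a b]) i = 0 := by
    rw [Fin.sum_univ_five]
    simp only [Matrix.cons_val_zero, Matrix.cons_val_one, Matrix.head_cons,
      Matrix.cons_val_two, Matrix.tail_cons, Matrix.cons_val_three,
      Matrix.cons_val_four]
    linear_combination (norm := module) key
  have hα : α = 1/2 := by
    have := hind hsum 2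
    simp at this
    linarith
  have hβ : β = 1/2 := by
    have := hind hsum 3
    simp at this
    linarith
  rw [← hαβ, hα, hβ, map_add]
  rw [smul_add]
end

section
/- Let $(T^c(V),d)$ and $(T^c(W),d)$ be differential graded tensor coalgebras whose differentials have linear parts $d_1$ preserving $V$ resp. $W$, and let $f\colon T^c(V)\to T^c(W)$ be a coalgebra morphism written $f=f_0+f_1+\cdots$ with $f_i((T^c)^r(V))\subset (T^c)^{r-i}(W)$. If $f_0\colon(V,d_1)\to(W,d_1)$ is a quasi-isomorphism and $V,W$ are graded vector spaces over $\mathbb Q$, then $f$ is a quasi-isomorphism. -/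
/-- The bracket... the word-length `n` piece `V^{⊗n}` of the tensor coalgebra
`T^c(V)`, realised inside the tensor algebra. -/
noncomputable def lenPiece (V : Type) [AddCommGroup V] [Module ℚ V] (n : ℕ) :
    Submodule ℚ (TensorAlgebra ℚ V) :=
  (LinearMap.range (TensorAlgebra.ι ℚ : V →ₗ[ℚ] TensorAlgebra ℚ V)) ^ n

/-- The word-length filtration `(T^c)^{≤ q}(V)` of the tensor coalgebra. -/
noncomputable def lenFilt (V : Type) [AddCommGroup V] [Module ℚ V] (q : ℕ) :
    Submodule ℚ (TensorAlgebra ℚ V) :=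
  ⨆ n : ℕ, ⨆ _ : n ≤ q, lenPiece V n

/-!
Filter both tensor coalgebras by word length. On the associated graded pieces `V^{⊗n}` the
differential `D` becomes the extension of `d_V` as a derivation twisted by the parity
`ε = (-1)^deg` (Koszul signs), and `f` becomes `f₀^{⊗n}`. Over a field, `(V, d_V)` retracts onto a
copy of its homology compatibly with `ε`; the induced Künneth homotopy on `V^{⊗n}` shows that
`f₀^{⊗n}` is a quasi-isomorphism, i.e. its mapping cone is acyclic. That `ε` anticommutes with
`d_V` is read off from `D² = 0` on words of length two. Induction along the filtration (the five
lemma) then makes the mapping cone of `f` acyclic, which is the claim.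
-/

open TensorAlgebra

section TensorAlgebraTools

variable {R M N : Type*} [CommSemiring R] [AddCommMonoid M] [Module R M]
  [AddCommMonoid N] [Module R N]

theorem TensorAlgebra.linearMap_ext_ι_mul {P : Type*} [AddCommMonoid P] [Module R P]
    {L L' : TensorAlgebra R M →ₗ[R] P} (h1 : L 1 = L' 1)
    (hι : ∀ v x, L x = L' x → L (ι R v * x) = L' (ι R v * x)) : L = L' := by
  suffices h : ∀ x z, L z = L' z → L (x * z) = L' (x * z) from
    LinearMap.ext fun x => by simpa using h x 1 h1
  intro x
  induction x using TensorAlgebra.induction with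
  | algebraMap r => intro z hz; simp [← Algebra.smul_def, hz]
  | ι v => exact hι v
  | mul x y hx hy => intro z hz; simpa [mul_assoc] using hx _ (hy z hz)
  | add x y hx hy => intro z hz; simp [add_mul, hx z hz, hy z hz]

noncomputable def tensorMap (g : M →ₗ[R] N) : TensorAlgebra R M →ₐ[R] TensorAlgebra R N :=
  lift R (ι R ∘ₗ g)

@[simp]
theorem tensorMap_ι (g : M →ₗ[R] N) (v : M) : tensorMap g (ι R v) = ι R (g v) := by
  simp [tensorMap]

theorem tensorMap_tensorMap {P : Type*} [AddCommMonoid P] [Module R P]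
    (g : N →ₗ[R] P) (h : M →ₗ[R] N) (x : TensorAlgebra R M) :
    tensorMap g (tensorMap h x) = tensorMap (g ∘ₗ h) x := by
  rw [← AlgHom.comp_apply]
  congr 1
  ext v
  simp

theorem tensorMap_tprod (g : M →ₗ[R] N) {n : ℕ} (v : Fin n → M) :
    tensorMap g (tprod R M n v) = tprod R N n (g ∘ v) := by
  simp [tprod_apply, map_list_prod, List.map_ofFn, Function.comp_def]

theorem tprod_succ {n : ℕ} (v : Fin (n + 1) → M) :
    tprod R M (n + 1) v = ι R (v 0) * tprod R M n (Fin.tail v) := by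
  simp [tprod_apply, List.ofFn_succ, Fin.tail]

end TensorAlgebraTools

section TwistedDerivation

variable {R M N : Type*} [CommSemiring R] [AddCommMonoid M] [Module R M] [AddCommMonoid N]
  [Module R N]

/-- Multiplicativity of `!![ι v, 0; ι (d v), ι (ε v)]` encodes the twisted Leibniz rule. -/
noncomputable def twistedDerMatrix (d ε : M →ₗ[R] M) :
    M →ₗ[R] Matrix (Fin 2) (Fin 2) (TensorAlgebra R M) where
  toFun v := !![ι R v, 0; ι R (d v), ι R (ε v)]
  map_add' x y := by ext i j; fin_cases i <;> fin_cases j <;> simp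
  map_smul' c x := by ext i j; fin_cases i <;> fin_cases j <;> simp

/-- The extension of `d` to `T(M)` as an `(id, tensorMap ε)`-twisted derivation. -/
noncomputable def twistedDer (d ε : M →ₗ[R] M) : TensorAlgebra R M →ₗ[R] TensorAlgebra R M :=
  Matrix.entryLinearMap R (TensorAlgebra R M) 1 0 ∘ₗ (lift R (twistedDerMatrix d ε)).toLinearMap

variable (d ε : M →ₗ[R] M)

theorem lift_twistedDerMatrix_apply (x : TensorAlgebra R M) :
    lift R (twistedDerMatrix d ε) x = !![x, 0; twistedDer d ε x, tensorMap ε x] := by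
  have hdiag : lift R (twistedDerMatrix d ε) x 0 0 = x ∧ lift R (twistedDerMatrix d ε) x 0 1 = 0 ∧
      lift R (twistedDerMatrix d ε) x 1 1 = tensorMap ε x := by
    induction x using TensorAlgebra.induction with
    | algebraMap r =>
      simp [AlgHom.commutes, Matrix.algebraMap_eq_diagonal, Matrix.diagonal]
    | ι v => simp [twistedDerMatrix]
    | mul x y hx hy => simp [Matrix.mul_apply, Fin.sum_univ_two, hx, hy]
    | add x y hx hy => simp [hx, hy]
  ext i j
  fin_cases i <;> fin_cases j <;> simp [hdiag, twistedDer]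

theorem twistedDer_mul (x y : TensorAlgebra R M) :
    twistedDer d ε (x * y) = twistedDer d ε x * y + tensorMap ε x * twistedDer d ε y := by
  have h := congrArg (· 1 0) (lift_twistedDerMatrix_apply d ε (x * y))
  simp only [map_mul, lift_twistedDerMatrix_apply] at h
  simpa [Matrix.mul_apply, Fin.sum_univ_two] using h.symm

@[simp]
theorem twistedDer_one : twistedDer d ε 1 = 0 := by
  simp [twistedDer]

@[simp]
theorem twistedDer_ι (v : M) : twistedDer d ε (ι R v) = ι R (d v) := by
  simp [twistedDer, twistedDerMatrix]

theorem twistedDer_ι_mul (v : M) (x : TensorAlgebra R M) :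
    twistedDer d ε (ι R v * x) = ι R (d v) * x + ι R (ε v) * twistedDer d ε x := by
  simp [twistedDer_mul]

theorem twistedDer_tensorMap_eq_zero {g : N →ₗ[R] M} (hdg : ∀ w, d (g w) = 0)
    (x : TensorAlgebra R N) : twistedDer d ε (tensorMap g x) = 0 := by
  have : twistedDer d ε ∘ₗ (tensorMap g).toLinearMap = 0 :=
    TensorAlgebra.linearMap_ext_ι_mul (by simp) fun v x hx => by
      simp_all [twistedDer_ι_mul]
  exact LinearMap.congr_fun this x

theorem tensorMap_twistedDer_eq_zero {p : M →ₗ[R] N} (hpd : ∀ x, p (d x) = 0)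
    (x : TensorAlgebra R M) : tensorMap p (twistedDer d ε x) = 0 := by
  have : (tensorMap p).toLinearMap ∘ₗ twistedDer d ε = 0 :=
    TensorAlgebra.linearMap_ext_ι_mul (by simp) fun v x hx => by
      simp_all [twistedDer_ι_mul]
  exact LinearMap.congr_fun this x

end TwistedDerivation

section TwistedDerivationRing

variable {R M : Type*} [CommRing R] [AddCommGroup M] [Module R M]

theorem neg_one_pow_natAbs_add (a b : ℤ) :
    (-1 : R) ^ (a + b).natAbs = (-1) ^ a.natAbs * (-1) ^ b.natAbs := by
  simp only [← Int.coe_negOnePow, Int.negOnePow_add, Units.val_mul, Int.cast_mul]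

theorem sum_filter_lt_succ {n : ℕ} (deg : Fin (n + 1) → ℤ) (i : Fin n) :
    ∑ j ∈ Finset.univ.filter (· < i.succ), deg j =
      deg 0 + ∑ j ∈ Finset.univ.filter (· < i), Fin.tail deg j := by
  simp [Finset.sum_filter, Fin.sum_univ_succ, Fin.succ_lt_succ_iff, Fin.tail]

theorem twistedDer_tprod (d ε : M →ₗ[R] M) {n : ℕ} (v : Fin n → M) (deg : Fin n → ℤ)
    (hv : ∀ i, ε (v i) = (-1 : R) ^ (deg i).natAbs • v i) :
    twistedDer d ε (tprod R M n v) =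
      ∑ i : Fin n, (-1 : R) ^ (∑ j ∈ Finset.univ.filter (· < i), deg j).natAbs •
        tprod R M n (fun j => if j = i then d (v j) else v j) := by
  induction n with
  | zero => simp [tprod_apply]
  | succ n ih =>
    rw [tprod_succ, twistedDer_ι_mul, hv 0, ih (Fin.tail v) (Fin.tail deg) (fun i => hv i.succ),
      Fin.sum_univ_succ]
    simp only [tprod_succ, Finset.mul_sum, sum_filter_lt_succ, neg_one_pow_natAbs_add]
    simp [Fin.tail, (Fin.succ_ne_zero _).symm, mul_smul, smul_comm ((-1 : R) ^ (deg 0).natAbs)]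

theorem twistedDer_twistedDer_ι_mul_ι {d ε : M →ₗ[R] M} (hd : ∀ x, d (d x) = 0)
    (hε : ∀ x, ε (ε x) = x) (u w : M) :
    twistedDer d ε (twistedDer d ε (ι R u * ι R w)) = ι R (ε (d u) + d (ε u)) * ι R (d w) := by
  simp [twistedDer_ι_mul, hd, hε, add_mul]

end TwistedDerivationRing

section Retraction

variable {R M : Type*} [CommRing R] [AddCommGroup M] [Module R M]

/-- A deformation retraction of the complex `(M, d)` onto a complement of the boundaries in the
cycles (a copy of its homology), compatible with the parity operator `ε`. -/
structure HomologyRetraction (d ε : M →ₗ[R] M) where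
  p : M →ₗ[R] M
  k : M →ₗ[R] M
  d_p : ∀ x, d (p x) = 0
  p_d : ∀ x, p (d x) = 0
  p_p : ∀ x, p (p x) = p x
  ε_p : ∀ x, ε (p x) = p (ε x)
  ε_k : ∀ x, ε (k x) = -k (ε x)
  homotopy : ∀ x, d (k x) + k (d x) + p x = x

namespace HomologyRetraction

variable {d ε : M →ₗ[R] M} (r : HomologyRetraction d ε)

/-- The Künneth homotopy `∑ᵢ (ε p)^{⊗ i} ⊗ k ⊗ id^{⊗ (n - i - 1)}` on `T(M)`. -/
noncomputable def tensorHomotopy : TensorAlgebra R M →ₗ[R] TensorAlgebra R M :=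
  twistedDer r.k (ε ∘ₗ r.p)

theorem twistedDer_tensorHomotopy_add (hε : ∀ x, ε (ε x) = x) (x : TensorAlgebra R M) :
    twistedDer d ε (r.tensorHomotopy x) + r.tensorHomotopy (twistedDer d ε x) +
      tensorMap r.p x = x := by
  have hdk : ∀ v, d (r.k v) = v - r.p v - r.k (d v) := fun v =>
    eq_sub_of_add_eq (eq_sub_of_add_eq (r.homotopy v))
  have key : twistedDer d ε ∘ₗ r.tensorHomotopy + r.tensorHomotopy ∘ₗ twistedDer d ε +
      (tensorMap r.p).toLinearMap = LinearMap.id := by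
    refine TensorAlgebra.linearMap_ext_ι_mul (by simp [tensorHomotopy]) fun v x hx => ?_
    simp only [LinearMap.add_apply, LinearMap.comp_apply, AlgHom.toLinearMap_apply,
      LinearMap.id_apply, tensorHomotopy] at hx ⊢
    rw [← eq_sub_iff_add_eq, ← eq_sub_iff_add_eq] at hx
    simp only [twistedDer_ι_mul, map_add, map_mul, tensorMap_ι, LinearMap.comp_apply, r.ε_k, hε,
      hdk, r.d_p, r.p_d, r.ε_p, map_zero, hx]
    simp only [map_sub, map_neg, sub_mul, neg_mul, zero_mul, mul_sub]
    abel
  exact LinearMap.congr_fun key x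

theorem eq_p_add_d_k {x : M} (hx : d x = 0) : x = r.p x + d (r.k x) := by
  conv_lhs => rw [← r.homotopy x]
  rw [hx, map_zero, add_zero, add_comm]

end HomologyRetraction

end Retraction

namespace HomologyRetraction

variable {R V W : Type*} [CommRing R] [AddCommGroup V] [Module R V] [AddCommGroup W] [Module R W]
  {dV εV : V →ₗ[R] V} {dW εW : W →ₗ[R] W}

/-- A chain map inducing an isomorphism in homology restricts to an isomorphism between the
chosen copies `range p` of the homologies; `ψ` is its inverse, precomposed with `p`. -/
theorem exists_homologyInverse (rV : HomologyRetraction dV εV) (rW : HomologyRetraction dW εW)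
    {f0 : V →ₗ[R] W} (hf0 : ∀ v, dW (f0 v) = f0 (dV v))
    (hf0_surj : ∀ w, dW w = 0 → ∃ v z, dV v = 0 ∧ f0 v = w + dW z)
    (hf0_inj : ∀ v, dV v = 0 → (∃ w, f0 v = dW w) → ∃ u, v = dV u) :
    ∃ ψ : W →ₗ[R] V, (∀ w, dV (ψ w) = 0) ∧ (∀ w, rW.p (f0 (ψ w)) = rW.p w) ∧
      ∀ v, ψ (rW.p (f0 (rV.p v))) = rV.p v := by
  set φ : LinearMap.range rV.p →ₗ[R] LinearMap.range rW.p :=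
    (rW.p ∘ₗ f0 ∘ₗ (LinearMap.range rV.p).subtype).codRestrict _ fun _ => ⟨_, rfl⟩
  have hφ_inj : Function.Injective φ := by
    rw [← LinearMap.ker_eq_bot, LinearMap.ker_eq_bot']
    rintro ⟨_, v, rfl⟩ hv
    have hφv : rW.p (f0 (rV.p v)) = 0 := congrArg Subtype.val hv
    have hcycle : dW (f0 (rV.p v)) = 0 := by rw [hf0, rV.d_p, map_zero]
    obtain ⟨u, hu⟩ := hf0_inj _ (rV.d_p v)
      ⟨_, by rw [rW.eq_p_add_d_k hcycle, hφv, zero_add]⟩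
    ext
    simp only [ZeroMemClass.coe_zero]
    rw [← rV.p_p, hu, rV.p_d]
  have hφ_surj : Function.Surjective φ := by
    rintro ⟨_, w, rfl⟩
    obtain ⟨v, z, hv, hfv⟩ := hf0_surj _ (rW.d_p w)
    refine ⟨⟨rV.p v, v, rfl⟩, Subtype.ext ?_⟩
    change rW.p (f0 (rV.p v)) = rW.p w
    have hpv : rV.p v = v - dV (rV.k v) := eq_sub_of_add_eq (rV.eq_p_add_d_k hv).symm
    rw [hpv, map_sub, hfv, ← hf0, map_sub, map_add, rW.p_d, rW.p_d, rW.p_p, add_zero, sub_zero]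
  set e := LinearEquiv.ofBijective φ ⟨hφ_inj, hφ_surj⟩
  refine ⟨(LinearMap.range rV.p).subtype ∘ₗ e.symm.toLinearMap ∘ₗ rW.p.rangeRestrict,
    fun w => ?_, fun w => ?_, fun v => ?_⟩
  · obtain ⟨v, hv⟩ := (e.symm (rW.p.rangeRestrict w)).2
    simp only [LinearMap.comp_apply, Submodule.subtype_apply, LinearEquiv.coe_coe, ← hv, rV.d_p]
  · exact congrArg Subtype.val (e.apply_symm_apply (rW.p.rangeRestrict w))
  · have h : rW.p.rangeRestrict (rW.p (f0 (rV.p v))) = e ⟨rV.p v, v, rfl⟩ :=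
      Subtype.ext (rW.p_p _)
    simp only [LinearMap.comp_apply, LinearEquiv.coe_coe, h, e.symm_apply_apply,
      Submodule.subtype_apply]

end HomologyRetraction

section ExistsRetraction

variable {K M : Type*} [Field K] [NeZero (2 : K)] [AddCommGroup M] [Module K M]
  {ε : M →ₗ[K] M}

theorem inv_two_smul_add_inv_two_smul (x : M) : (2⁻¹ : K) • x + (2⁻¹ : K) • x = x := by
  rw [← add_smul, ← two_mul, mul_inv_cancel₀ two_ne_zero, one_smul]

/-- Averaging an arbitrary projection onto `S` over `{1, ε}`. -/
theorem exists_isProj_commute (hε : ∀ x, ε (ε x) = x) {S : Submodule K M}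
    (hS : ∀ x ∈ S, ε x ∈ S) : ∃ π : M →ₗ[K] M, LinearMap.IsProj S π ∧ ∀ x, ε (π x) = π (ε x) := by
  obtain ⟨C, hC⟩ := S.exists_isCompl
  set π₀ := S.projection C hC
  refine ⟨(2⁻¹ : K) • (π₀ + ε ∘ₗ π₀ ∘ₗ ε), ⟨fun x => ?_, fun x hx => ?_⟩, fun x => ?_⟩
  · exact S.smul_mem _ (S.add_mem (by simp [π₀]) (hS _ (by simp [π₀])))
  · simp [π₀, Submodule.projection_apply_of_mem_left hC hx,
      Submodule.projection_apply_of_mem_left hC (hS x hx), hε, inv_two_smul_add_inv_two_smul]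
  · simp [hε, add_comm]

/-- Average over `{1, ε}` a right inverse of `d` on its range, pushed into `ker πZ`. -/
theorem exists_boundary_section {d : M →ₗ[K] M} (hε : ∀ x, ε (ε x) = x)
    (hεd : ∀ x, ε (d x) = -d (ε x)) {πZ πB : M →ₗ[K] M}
    (hπZ : LinearMap.IsProj (LinearMap.ker d) πZ) (hεπZ : ∀ x, ε (πZ x) = πZ (ε x))
    (hπB : LinearMap.IsProj (LinearMap.range d) πB) (hεπB : ∀ x, ε (πB x) = πB (ε x)) :
    ∃ s : M →ₗ[K] M, (∀ y, d (s y) = πB y) ∧ (∀ y, πZ (s y) = 0) ∧ ∀ y, ε (s y) = -s (ε y) := by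
  have hdε (x : M) : d (ε x) = -ε (d x) := by rw [hεd, neg_neg]
  have hdπZ (x : M) : d (πZ x) = 0 := hπZ.map_mem x
  have hπZπZ (x : M) : πZ (πZ x) = πZ x := hπZ.map_id _ (hπZ.map_mem x)
  obtain ⟨g, hg⟩ := d.rangeRestrict.exists_rightInverse_of_surjective d.range_rangeRestrict
  have hdg (b : LinearMap.range d) : d (g b) = b := congrArg Subtype.val (LinearMap.congr_fun hg b)
  set σ : M →ₗ[K] M := (LinearMap.id - πZ) ∘ₗ g ∘ₗ hπB.codRestrict
  have hdσ (y : M) : d (σ y) = πB y := by simp [σ, hdπZ, hdg]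
  have hπZσ (y : M) : πZ (σ y) = 0 := by simp [σ, hπZπZ]
  refine ⟨(2⁻¹ : K) • (σ - ε ∘ₗ σ ∘ₗ ε), fun y => ?_, fun y => ?_, fun y => ?_⟩
  · simp [hdσ, hdε, hεπB, hε, inv_two_smul_add_inv_two_smul]
  · simp [← hεπZ, hπZσ]
  · simp [hε]; module

theorem exists_homologyRetraction {d : M →ₗ[K] M} (hd : ∀ x, d (d x) = 0)
    (hε : ∀ x, ε (ε x) = x) (hεd : ∀ x, ε (d x) = -d (ε x)) :
    Nonempty (HomologyRetraction d ε) := by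
  obtain ⟨πZ, hπZ, hεπZ⟩ := exists_isProj_commute hε (S := LinearMap.ker d) fun x hx => by
    rw [LinearMap.mem_ker] at hx ⊢
    rw [← neg_eq_zero, ← hεd, hx, map_zero]
  obtain ⟨πB, hπB, hεπB⟩ := exists_isProj_commute hε (S := LinearMap.range d) <| by
    rintro _ ⟨u, rfl⟩
    exact ⟨-ε u, by rw [map_neg, hεd]⟩
  have hdπZ (x : M) : d (πZ x) = 0 := hπZ.map_mem x
  have hdπB (x : M) : d (πB x) = 0 := by
    obtain ⟨u, hu⟩ := hπB.map_mem x
    rw [← hu, hd]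
  have hπZπB (x : M) : πZ (πB x) = πB x := hπZ.map_id _ (hdπB x)
  have hπZπZ (x : M) : πZ (πZ x) = πZ x := hπZ.map_id _ (hπZ.map_mem x)
  have hπBπB (x : M) : πB (πB x) = πB x := hπB.map_id _ (hπB.map_mem x)
  have hπZd (x : M) : πZ (d x) = d x := hπZ.map_id _ (hd x)
  have hπBd (x : M) : πB (d x) = d x := hπB.map_id _ ⟨x, rfl⟩
  obtain ⟨s, hds, hπZs, hεs⟩ := exists_boundary_section hε hεd hπZ hεπZ hπB hεπB
  have hsd (x : M) : s (d x) = x - πZ x := by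
    have hker : s (d x) - (x - πZ x) ∈ LinearMap.ker d := by simp [hds, hπBd, hdπZ]
    rw [← sub_eq_zero, ← hπZ.map_id _ hker]
    simp [hπZs, hπZπZ]
  -- `p` projects onto `ker πB ∩ ker d`, a complement of the boundaries in the cycles
  exact ⟨{
    p := πZ - πB ∘ₗ πZ
    k := s ∘ₗ πZ
    d_p := fun x => by simp [hdπZ, hdπB]
    p_d := fun x => by simp [hπZd, hπBd]
    p_p := fun x => by simp [hπZπZ, hπZπB, hπBπB]
    ε_p := fun x => by simp [hεπZ, hεπB]
    ε_k := fun x => by simp [hεs, hεπZ]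
    homotopy := fun x => by simp [hds, hsd, hπZd]; abel }⟩

end ExistsRetraction

section Cone

variable {R X Y : Type*} [CommRing R] [AddCommGroup X] [Module R X] [AddCommGroup Y] [Module R Y]

/-- Exactness on `S × T` of the mapping cone of `F : (X, A) → (Y, B)`, whose differential is
`(ξ, η) ↦ (-A ξ, F ξ + B η)`. -/
def ConeExactOn (A : X →ₗ[R] X) (B : Y →ₗ[R] Y) (F : X →ₗ[R] Y) (S : Submodule R X)
    (T : Submodule R Y) : Prop :=
  ∀ ξ ∈ S, ∀ η ∈ T, A ξ = 0 → F ξ + B η = 0 →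
    ∃ w₁ ∈ S, ∃ w₂ ∈ T, A w₁ = -ξ ∧ F w₁ + B w₂ = η

theorem ConeExactOn.surj_inj_homology {A : X →ₗ[R] X} {B : Y →ₗ[R] Y} {F : X →ₗ[R] Y}
    (h : ConeExactOn A B F ⊤ ⊤) :
    (∀ y, B y = 0 → ∃ x z, A x = 0 ∧ F x = y + B z) ∧
      (∀ x, A x = 0 → (∃ y, F x = B y) → ∃ u, x = A u) := by
  refine ⟨fun y hy => ?_, fun x hx ⟨y, hxy⟩ => ?_⟩
  · obtain ⟨w₁, -, w₂, -, hw₁, hw⟩ := h 0 trivial y trivial (map_zero A) (by simp [hy])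
    exact ⟨w₁, -w₂, by simpa using hw₁, by rw [map_neg, ← hw]; abel⟩
  · obtain ⟨w₁, -, -, -, hw₁, -⟩ :=
      h x trivial (-y) trivial hx (by rw [map_neg, hxy, add_neg_cancel])
    exact ⟨-w₁, by rw [map_neg, hw₁, neg_neg]⟩

end Cone

section WordLength

variable {M N : Type} [AddCommGroup M] [Module ℚ M] [AddCommGroup N] [Module ℚ N]

theorem isInternal_lenPiece : DirectSum.IsInternal (lenPiece M) :=
  DirectSum.Decomposition.isInternal (ℳ := (LinearMap.range (ι ℚ : M →ₗ[ℚ] _) ^ ·))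

theorem ι_mul_mem_lenPiece {n : ℕ} (v : M) {x : TensorAlgebra ℚ M} (hx : x ∈ lenPiece M n) :
    ι ℚ v * x ∈ lenPiece M (n + 1) := by
  rw [lenPiece, pow_succ']
  exact Submodule.mul_mem_mul (LinearMap.mem_range_self _ v) hx

theorem ι_mem_lenPiece_one (v : M) : ι ℚ v ∈ lenPiece M 1 := by
  rw [lenPiece, pow_one]
  exact LinearMap.mem_range_self _ v

theorem lenPiece_le_lenFilt {n q : ℕ} (h : n ≤ q) : lenPiece M n ≤ lenFilt M q :=
  le_iSup₂_of_le n h le_rfl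

theorem lenFilt_le {q : ℕ} {S : Submodule ℚ (TensorAlgebra ℚ M)}
    (h : ∀ n ≤ q, lenPiece M n ≤ S) : lenFilt M q ≤ S :=
  iSup₂_le h

theorem lenFilt_mono : Monotone (lenFilt M) :=
  fun _ _ h => lenFilt_le fun _ hn => lenPiece_le_lenFilt (hn.trans h)

theorem lenFilt_zero : lenFilt M 0 = 1 :=
  le_antisymm (lenFilt_le fun n hn => by simp [Nat.le_zero.mp hn, lenPiece])
    (by simpa [lenPiece] using lenPiece_le_lenFilt (M := M) (le_refl 0))

theorem lenFilt_succ (q : ℕ) : lenFilt M (q + 1) = lenFilt M q ⊔ lenPiece M (q + 1) := by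
  refine le_antisymm (lenFilt_le fun n hn => ?_)
    (sup_le (lenFilt_mono q.le_succ) (lenPiece_le_lenFilt le_rfl))
  rcases hn.lt_or_eq with hn | rfl
  · exact (lenPiece_le_lenFilt (Nat.lt_succ_iff.mp hn)).trans le_sup_left
  · exact le_sup_right

theorem disjoint_lenPiece_lenFilt (q : ℕ) : Disjoint (lenPiece M (q + 1)) (lenFilt M q) :=
  (isInternal_lenPiece.submodule_iSupIndep (q + 1)).mono_right <|
    lenFilt_le fun n hn => le_iSup₂_of_le n (by omega) le_rfl

theorem eq_zero_of_mem_lenPiece_of_mem_lenFilt {q : ℕ} {x : TensorAlgebra ℚ M}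
    (hx : x ∈ lenPiece M (q + 1)) (hx' : x ∈ lenFilt M q) : x = 0 :=
  (Submodule.disjoint_def.mp (disjoint_lenPiece_lenFilt q)) x hx hx'

theorem exists_mem_lenFilt (x : TensorAlgebra ℚ M) : ∃ q, x ∈ lenFilt M q := by
  have htop : ⨆ q, lenFilt M q = ⊤ := eq_top_iff.mpr <|
    isInternal_lenPiece.submodule_iSup_eq_top.ge.trans
      (iSup_mono fun _ => lenPiece_le_lenFilt le_rfl)
  exact (Submodule.mem_iSup_of_directed _ lenFilt_mono.directed_le).mp (htop ▸ Submodule.mem_top)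

theorem tensorMap_mem_lenPiece (g : M →ₗ[ℚ] N) {n : ℕ} {x : TensorAlgebra ℚ M}
    (hx : x ∈ lenPiece M n) : tensorMap g x ∈ lenPiece N n := by
  have hle : (lenPiece M n).map (tensorMap g).toLinearMap ≤ lenPiece N n := by
    rw [lenPiece, lenPiece, Submodule.map_pow]
    refine pow_le_pow_left' ?_ n
    rintro _ ⟨_, ⟨v, rfl⟩, rfl⟩
    exact ⟨g v, by simp⟩
  exact hle (Submodule.mem_map_of_mem hx)

theorem twistedDer_mem_lenPiece (d ε : M →ₗ[ℚ] M) {n : ℕ} {x : TensorAlgebra ℚ M}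
    (hx : x ∈ lenPiece M n) : twistedDer d ε x ∈ lenPiece M n := by
  induction hx using Submodule.pow_induction_on_left' with
  | algebraMap r => simp [Algebra.algebraMap_eq_smul_one]
  | add x y i _ _ hx hy => rw [map_add]; exact add_mem hx hy
  | mem_mul m hm i x _ hx =>
    obtain ⟨v, rfl⟩ := hm
    rw [twistedDer_ι_mul]
    exact add_mem (ι_mul_mem_lenPiece _ ‹_›) (ι_mul_mem_lenPiece _ hx)

end WordLength

section LeadingPart

variable {M N P : Type} [AddCommGroup M] [Module ℚ M] [AddCommGroup N] [Module ℚ N]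
  [AddCommGroup P] [Module ℚ P]

theorem linearMap_ext_lenPiece {F G : TensorAlgebra ℚ M →ₗ[ℚ] TensorAlgebra ℚ N}
    (h : ∀ n, ∀ x ∈ lenPiece M n, F x = G x) : F = G := by
  ext x
  refine Submodule.iSup_induction (lenPiece M) (motive := fun x => F x = G x)
    ((isInternal_lenPiece (M := M)).submodule_iSup_eq_top ▸ Submodule.mem_top) h (by simp) ?_
  intro x y hx hy
  simp [hx, hy]

open scoped Pointwise in
theorem lenPiece_le_span_tprod {κ : Type*} (b : Module.Basis κ ℚ M) (n : ℕ) :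
    lenPiece M n ≤ Submodule.span ℚ (Set.range fun w : Fin n → κ => tprod ℚ M n (b ∘ w)) := by
  have hι : LinearMap.range (ι ℚ : M →ₗ[ℚ] TensorAlgebra ℚ M) =
      Submodule.span ℚ (Set.range (ι ℚ ∘ b)) := by
    rw [LinearMap.range_eq_map, ← b.span_eq, Submodule.map_span, Set.range_comp]
  rw [lenPiece, hι, Submodule.span_pow]
  refine Submodule.span_mono ?_
  induction n with
  | zero => rintro _ rfl; exact ⟨Fin.elim0, by simp [tprod_apply]⟩
  | succ n ih =>
    rw [pow_succ']
    rintro _ ⟨_, ⟨j, rfl⟩, _, hy, rfl⟩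
    obtain ⟨w, rfl⟩ := ih hy
    exact ⟨Fin.cons j w, by simp [Function.comp_def]⟩

def PreservesLenFilt (F : TensorAlgebra ℚ M →ₗ[ℚ] TensorAlgebra ℚ N) : Prop :=
  ∀ n, ∀ x ∈ lenPiece M n, F x ∈ lenFilt N n

def PreservesLenPiece (G : TensorAlgebra ℚ M →ₗ[ℚ] TensorAlgebra ℚ N) : Prop :=
  ∀ n, ∀ x ∈ lenPiece M n, G x ∈ lenPiece N n

/-- `G` is the word-length preserving part of `F`. For `n = 0` the truncated `n - 1` only asks
`F x - G x` to be a scalar. -/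
def IsLeadingPart (F G : TensorAlgebra ℚ M →ₗ[ℚ] TensorAlgebra ℚ N) : Prop :=
  ∀ n, ∀ x ∈ lenPiece M n, F x - G x ∈ lenFilt N (n - 1)

theorem PreservesLenFilt.mem_lenFilt {F : TensorAlgebra ℚ M →ₗ[ℚ] TensorAlgebra ℚ N}
    (hF : PreservesLenFilt F) {q : ℕ} {x : TensorAlgebra ℚ M} (hx : x ∈ lenFilt M q) :
    F x ∈ lenFilt N q :=
  (lenFilt_le (S := (lenFilt N q).comap F) fun n hn y hy => lenFilt_mono hn (hF n y hy)) hx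

theorem preservesLenPiece_tensorMap (g : M →ₗ[ℚ] N) :
    PreservesLenPiece (tensorMap g).toLinearMap :=
  fun _ _ => tensorMap_mem_lenPiece g

theorem preservesLenPiece_twistedDer (d ε : M →ₗ[ℚ] M) : PreservesLenPiece (twistedDer d ε) :=
  fun _ _ => twistedDer_mem_lenPiece d ε

theorem PreservesLenPiece.comp {G : TensorAlgebra ℚ M →ₗ[ℚ] TensorAlgebra ℚ N}
    {G' : TensorAlgebra ℚ N →ₗ[ℚ] TensorAlgebra ℚ P} (hG' : PreservesLenPiece G')
    (hG : PreservesLenPiece G) : PreservesLenPiece (G' ∘ₗ G) :=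
  fun n x hx => hG' n _ (hG n x hx)

theorem isLeadingPart_of_tprod {κ : Type*} (b : Module.Basis κ ℚ M)
    {F G : TensorAlgebra ℚ M →ₗ[ℚ] TensorAlgebra ℚ N}
    (h : ∀ n (w : Fin n → κ), F (tprod ℚ M n (b ∘ w)) - G (tprod ℚ M n (b ∘ w)) ∈
      lenFilt N (n - 1)) :
    IsLeadingPart F G := fun n x hx => by
  have hle : lenPiece M n ≤ (lenFilt N (n - 1)).comap (F - G) :=
    (lenPiece_le_span_tprod b n).trans (Submodule.span_le.mpr <| by
      rintro _ ⟨w, rfl⟩; exact h n w)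
  exact hle hx

theorem isLeadingPart_tensorMap {f : TensorAlgebra ℚ M →ₗ[ℚ] TensorAlgebra ℚ N}
    {f0 : M →ₗ[ℚ] N}
    (hfgr : ∀ (n : ℕ) (v : Fin n → M), f ((List.ofFn fun i => ι ℚ (v i)).prod)
      - (List.ofFn fun i => ι ℚ (f0 (v i))).prod ∈ lenFilt N (n - 1)) :
    IsLeadingPart f (tensorMap f0) :=
  isLeadingPart_of_tprod (Module.Basis.ofVectorSpace ℚ M) fun n w => by
    change f _ - tensorMap f0 _ ∈ _
    rw [tensorMap_tprod]
    simpa [tprod_apply] using hfgr n _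

theorem IsLeadingPart.sub_mem_lenFilt {F G : TensorAlgebra ℚ M →ₗ[ℚ] TensorAlgebra ℚ N}
    (h : IsLeadingPart F G) {q : ℕ} {x : TensorAlgebra ℚ M} (hx : x ∈ lenPiece M (q + 1)) :
    F x - G x ∈ lenFilt N q :=
  h (q + 1) x hx

theorem IsLeadingPart.comp {F G : TensorAlgebra ℚ M →ₗ[ℚ] TensorAlgebra ℚ N}
    {F' G' : TensorAlgebra ℚ N →ₗ[ℚ] TensorAlgebra ℚ P} (h : IsLeadingPart F G)
    (h' : IsLeadingPart F' G') (hF' : PreservesLenFilt F') (hG : PreservesLenPiece G) :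
    IsLeadingPart (F' ∘ₗ F) (G' ∘ₗ G) := fun n x hx => by
  have hsplit : F' (F x) - G' (G x) = F' (F x - G x) + (F' (G x) - G' (G x)) := by
    rw [map_sub]; abel
  rw [LinearMap.comp_apply, LinearMap.comp_apply, hsplit]
  exact add_mem (hF'.mem_lenFilt (h n x hx)) (h' n _ (hG n x hx))

theorem IsLeadingPart.unique {F G₁ G₂ : TensorAlgebra ℚ M →ₗ[ℚ] TensorAlgebra ℚ N}
    (h₁ : IsLeadingPart F G₁) (h₂ : IsLeadingPart F G₂) (hG₁ : PreservesLenPiece G₁)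
    (hG₂ : PreservesLenPiece G₂) {q : ℕ} {x : TensorAlgebra ℚ M} (hx : x ∈ lenPiece M (q + 1)) :
    G₁ x = G₂ x := by
  rw [← sub_eq_zero]
  refine eq_zero_of_mem_lenPiece_of_mem_lenFilt (sub_mem (hG₁ _ x hx) (hG₂ _ x hx)) ?_
  simpa using sub_mem (h₂ _ x hx) (h₁ _ x hx)

end LeadingPart

section Parity

variable {M : Type} [AddCommGroup M] [Module ℚ M]

/-- The parity operator `ε = (-1)^deg` on a basis of homogeneous vectors; the Koszul formula for
`twistedDer d ε` then matches the assumed leading part of `D` on basis words. -/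
theorem exists_parity_isLeadingPart (g : ℤ → Submodule ℚ M) (hg : (⨆ i, g i) = ⊤)
    (d : M →ₗ[ℚ] M) (D : TensorAlgebra ℚ M →ₗ[ℚ] TensorAlgebra ℚ M)
    (hDgr : ∀ (n : ℕ) (v : Fin n → M) (deg : Fin n → ℤ), (∀ i, v i ∈ g (deg i)) →
      D ((List.ofFn fun i => ι ℚ (v i)).prod)
        - ∑ i : Fin n,
            ((-1 : ℚ) ^ (∑ j ∈ Finset.univ.filter (fun j => j < i), deg j).natAbs) •
              (List.ofFn fun j => ι ℚ (if j = i then d (v j) else v j)).prod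
        ∈ lenFilt M (n - 1)) :
    ∃ ε : M →ₗ[ℚ] M, (∀ x, ε (ε x) = x) ∧ IsLeadingPart D (twistedDer d ε) := by
  have hspan : ⊤ ≤ Submodule.span ℚ (⋃ i, (g i : Set M)) := by
    rw [Submodule.span_iUnion]; simp [hg]
  set b := Module.Basis.ofSpan hspan
  have hdeg (j) : ∃ i, b j ∈ g i := Set.mem_iUnion.mp (Module.Basis.ofSpan_subset hspan ⟨j, rfl⟩)
  choose deg hdeg using hdeg
  set ε := b.constr ℚ fun j => (-1 : ℚ) ^ (deg j).natAbs • b j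
  have hεb (j) : ε (b j) = (-1 : ℚ) ^ (deg j).natAbs • b j := b.constr_basis ℚ _ j
  refine ⟨ε, fun x => ?_, isLeadingPart_of_tprod b fun n w => ?_⟩
  · have hεε : ε ∘ₗ ε = LinearMap.id := b.ext fun j => by
      simp [hεb, smul_smul, ← pow_add, ← two_mul, pow_mul]
    exact LinearMap.congr_fun hεε x
  · rw [twistedDer_tprod d ε (b ∘ w) (deg ∘ w) fun i => hεb (w i)]
    simpa [tprod_apply] using hDgr n (b ∘ w) (deg ∘ w) fun i => hdeg (w i)

/-- `d` and `ε` anticommute because the leading part of `D ∘ D = 0` on words of length two,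
`twistedDer d ε` squared, sends `u ⊗ w` to `(ε d + d ε) u ⊗ d w`. -/
theorem anticomm_of_isLeadingPart {d ε : M →ₗ[ℚ] M} (hd : ∀ x, d (d x) = 0)
    (hε : ∀ x, ε (ε x) = x) {D : TensorAlgebra ℚ M →ₗ[ℚ] TensorAlgebra ℚ M}
    (hD2 : ∀ x, D (D x) = 0) (hDfilt : PreservesLenFilt D)
    (hDA : IsLeadingPart D (twistedDer d ε)) (x : M) : ε (d x) = -d (ε x) := by
  rw [eq_neg_iff_add_eq_zero]
  by_cases hd0 : ∀ w, d w = 0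
  · simp [hd0]
  obtain ⟨w, hw⟩ := not_forall.mp hd0
  have hA := preservesLenPiece_twistedDer d ε
  have hDD : IsLeadingPart (D ∘ₗ D) 0 := fun n y _ => by simp [hD2]
  have hAA := (hDA.comp hDA hDfilt hA).unique hDD (hA.comp hA)
    (fun _ _ _ => zero_mem _) (ι_mul_mem_lenPiece x (ι_mem_lenPiece_one w))
  rw [LinearMap.comp_apply, twistedDer_twistedDer_ι_mul_ι hd hε, LinearMap.zero_apply] at hAA
  rw [mul_eq_zero, ι_eq_zero_iff, ι_eq_zero_iff] at hAA
  exact hAA.resolve_right hw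

end Parity

section GradedQuasiIso

variable {V W : Type} [AddCommGroup V] [Module ℚ V] [AddCommGroup W] [Module ℚ W]
  {dV εV : V →ₗ[ℚ] V} {dW εW : W →ₗ[ℚ] W} {f0 : V →ₗ[ℚ] W}

theorem tensorMap_twistedDer_comm {D : TensorAlgebra ℚ V →ₗ[ℚ] TensorAlgebra ℚ V}
    {D' : TensorAlgebra ℚ W →ₗ[ℚ] TensorAlgebra ℚ W}
    {f : TensorAlgebra ℚ V →ₗ[ℚ] TensorAlgebra ℚ W} (hD : IsLeadingPart D (twistedDer dV εV))
    (hD' : IsLeadingPart D' (twistedDer dW εW)) (hf : IsLeadingPart f (tensorMap f0))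
    (hD'filt : PreservesLenFilt D') (hffilt : PreservesLenFilt f) (hfD : D' ∘ₗ f = f ∘ₗ D)
    (x : TensorAlgebra ℚ V) :
    tensorMap f0 (twistedDer dV εV x) = twistedDer dW εW (tensorMap f0 x) := by
  refine LinearMap.congr_fun (linearMap_ext_lenPiece (F := (tensorMap f0).toLinearMap ∘ₗ _)
    (G := twistedDer dW εW ∘ₗ (tensorMap f0).toLinearMap) fun n x hx => ?_) x
  cases n with
  | zero =>
    obtain ⟨r, rfl⟩ := Submodule.mem_one.mp (show x ∈ 1 by simpa [lenPiece] using hx)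
    simp [Algebra.algebraMap_eq_smul_one]
  | succ q =>
    have h₁ := hD.comp hf hffilt (preservesLenPiece_twistedDer dV εV)
    have h₂ := hf.comp hD' hD'filt (preservesLenPiece_tensorMap f0)
    rw [hfD] at h₂
    exact h₁.unique h₂
      ((preservesLenPiece_tensorMap f0).comp (preservesLenPiece_twistedDer dV εV))
      ((preservesLenPiece_twistedDer dW εW).comp (preservesLenPiece_tensorMap f0)) hx

namespace HomologyRetraction

theorem eq_twistedDer_tensorHomotopy_add_tensorMap (r : HomologyRetraction dV εV)
    (hε : ∀ x, εV (εV x) = x) {x : TensorAlgebra ℚ V} (hx : twistedDer dV εV x = 0) :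
    x = twistedDer dV εV (r.tensorHomotopy x) + tensorMap r.p x := by
  conv_lhs => rw [← r.twistedDer_tensorHomotopy_add hε x]
  rw [hx, map_zero, add_zero]

/-- `x = ψ^{⊗ n} y` works: `f₀^{⊗ n} x - y` is a cycle killed by `p^{⊗ n}`, hence a boundary. -/
theorem exists_tensorMap_eq_add_twistedDer (rW : HomologyRetraction dW εW)
    (hεW : ∀ y, εW (εW y) = y) {ψ : W →ₗ[ℚ] V} (hdψ : ∀ w, dV (ψ w) = 0)
    (hpψ : ∀ w, rW.p (f0 (ψ w)) = rW.p w)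
    (hchain : ∀ x, tensorMap f0 (twistedDer dV εV x) = twistedDer dW εW (tensorMap f0 x))
    {n : ℕ} {y : TensorAlgebra ℚ W} (hy : y ∈ lenPiece W n) (hBy : twistedDer dW εW y = 0) :
    ∃ x ∈ lenPiece V n, ∃ z ∈ lenPiece W n,
      twistedDer dV εV x = 0 ∧ tensorMap f0 x = y + twistedDer dW εW z := by
  set x := tensorMap ψ y
  have hAx : twistedDer dV εV x = 0 := twistedDer_tensorMap_eq_zero dV εV hdψ y
  set c := tensorMap f0 x - y
  have hBc : twistedDer dW εW c = 0 := by
    rw [map_sub, ← hchain, hAx, hBy, map_zero, sub_zero]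
  have hPc : tensorMap rW.p c = 0 := by
    have : rW.p ∘ₗ f0 ∘ₗ ψ = rW.p := LinearMap.ext hpψ
    simp [c, x, tensorMap_tensorMap, this]
  have hc := rW.eq_twistedDer_tensorHomotopy_add_tensorMap hεW hBc
  rw [hPc, add_zero] at hc
  refine ⟨x, tensorMap_mem_lenPiece ψ hy, rW.tensorHomotopy c,
    twistedDer_mem_lenPiece _ _ (sub_mem (tensorMap_mem_lenPiece f0
      (tensorMap_mem_lenPiece ψ hy)) hy), hAx, ?_⟩
  rw [← hc, add_sub_cancel]

/-- The homotopy writes `x` as a boundary plus `p^{⊗ n} x = (ψ p f₀ p)^{⊗ n} x`, and the latter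
vanishes because `f₀^{⊗ n} x` is a boundary. -/
theorem exists_eq_twistedDer (rV : HomologyRetraction dV εV) (hεV : ∀ x, εV (εV x) = x)
    (rW : HomologyRetraction dW εW) {ψ : W →ₗ[ℚ] V}
    (hψ : ∀ v, ψ (rW.p (f0 (rV.p v))) = rV.p v)
    (hchain : ∀ x, tensorMap f0 (twistedDer dV εV x) = twistedDer dW εW (tensorMap f0 x))
    {n : ℕ} {x : TensorAlgebra ℚ V} (hx : x ∈ lenPiece V n) (hAx : twistedDer dV εV x = 0)
    {y : TensorAlgebra ℚ W} (hxy : tensorMap f0 x = twistedDer dW εW y) :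
    ∃ u ∈ lenPiece V n, x = twistedDer dV εV u := by
  have hx' := rV.eq_twistedDer_tensorHomotopy_add_tensorMap hεV hAx
  have hPx : tensorMap rV.p x = 0 := by
    have hψ' : ψ ∘ₗ rW.p ∘ₗ f0 ∘ₗ rV.p = rV.p := LinearMap.ext hψ
    have hFPx : tensorMap rW.p (tensorMap f0 (tensorMap rV.p x)) = 0 := by
      have hF := congrArg (tensorMap rW.p ∘ tensorMap f0) hx'
      simp only [Function.comp_apply, hxy, map_add, hchain,
        tensorMap_twistedDer_eq_zero _ _ rW.p_d, zero_add] at hF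
      exact hF.symm
    simpa [tensorMap_tensorMap, hψ'] using congrArg (tensorMap ψ) hFPx
  rw [hPx, add_zero] at hx'
  exact ⟨rV.tensorHomotopy x, twistedDer_mem_lenPiece _ _ hx, hx'⟩

theorem coneExactOn_lenPiece (rV : HomologyRetraction dV εV) (hεV : ∀ x, εV (εV x) = x)
    (rW : HomologyRetraction dW εW) (hεW : ∀ y, εW (εW y) = y)
    (hf0 : ∀ v, dW (f0 v) = f0 (dV v))
    (hf0_surj : ∀ w, dW w = 0 → ∃ v z, dV v = 0 ∧ f0 v = w + dW z)
    (hf0_inj : ∀ v, dV v = 0 → (∃ w, f0 v = dW w) → ∃ u, v = dV u)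
    (hchain : ∀ x, tensorMap f0 (twistedDer dV εV x) = twistedDer dW εW (tensorMap f0 x))
    (n : ℕ) :
    ConeExactOn (twistedDer dV εV) (twistedDer dW εW) (tensorMap f0).toLinearMap
      (lenPiece V n) (lenPiece W n) := by
  intro ξ hξ η hη hAξ hξη
  obtain ⟨ψ, hdψ, hpψ, hψ⟩ := exists_homologyInverse rV rW hf0 hf0_surj hf0_inj
  obtain ⟨u, hu, rfl⟩ := rV.exists_eq_twistedDer hεV rW hψ hchain hξ hAξ (y := -η)
    (by rw [map_neg]; exact eq_neg_of_add_eq_zero_left hξη)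
  set c := η + tensorMap f0 u
  have hBc : twistedDer dW εW c = 0 := by
    rw [map_add, ← hchain, add_comm]; exact hξη
  obtain ⟨a, ha, z, hz, hAa, hFa⟩ := rW.exists_tensorMap_eq_add_twistedDer hεW hdψ hpψ hchain
    (add_mem hη (tensorMap_mem_lenPiece f0 hu)) hBc
  refine ⟨a - u, sub_mem ha hu, -z, neg_mem hz, by rw [map_sub, hAa, zero_sub], ?_⟩
  simp only [AlgHom.toLinearMap_apply, map_sub, map_neg, hFa]
  abel

end HomologyRetraction

end GradedQuasiIso

section FilteredCone

variable {V W : Type} [AddCommGroup V] [Module ℚ V] [AddCommGroup W] [Module ℚ W]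

structure IsFilteredWithLeadingPart (F G : TensorAlgebra ℚ V →ₗ[ℚ] TensorAlgebra ℚ W) : Prop where
  preservesLenFilt : PreservesLenFilt F
  isLeadingPart : IsLeadingPart F G
  preservesLenPiece : PreservesLenPiece G

theorem PreservesLenFilt.apply_one_eq_zero {D : TensorAlgebra ℚ V →ₗ[ℚ] TensorAlgebra ℚ V}
    (hD : PreservesLenFilt D) (hD2 : ∀ x, D (D x) = 0) : D 1 = 0 := by
  have h1 : D 1 ∈ lenFilt V 0 := hD 0 1 (by simp [lenPiece])
  rw [lenFilt_zero] at h1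
  obtain ⟨t, ht⟩ := Submodule.mem_one.mp h1
  have htt : algebraMap ℚ (TensorAlgebra ℚ V) (t * t) = 0 := by
    rw [← hD2 1, ← ht, Algebra.algebraMap_eq_smul_one t, map_smul, ← ht, Algebra.smul_def,
      ← map_mul]
  have ht0 : t = 0 := by simpa using htt
  rw [← ht, ht0, map_zero]

variable {D A : TensorAlgebra ℚ V →ₗ[ℚ] TensorAlgebra ℚ V}
  {D' B : TensorAlgebra ℚ W →ₗ[ℚ] TensorAlgebra ℚ W}
  {f F : TensorAlgebra ℚ V →ₗ[ℚ] TensorAlgebra ℚ W}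

/-- A cone cycle of word length `≤ q + 1` is homologous to one of word length `≤ q`: its top
components form a cycle of the associated graded cone, hence a boundary there. -/
theorem exists_cone_boundary_sub_mem_lenFilt (hD : IsFilteredWithLeadingPart D A)
    (hD' : IsFilteredWithLeadingPart D' B) (hf : IsFilteredWithLeadingPart f F) {q : ℕ}
    (hgr : ConeExactOn A B F (lenPiece V (q + 1)) (lenPiece W (q + 1)))
    {x : TensorAlgebra ℚ V} {y : TensorAlgebra ℚ W} (hx : x ∈ lenFilt V (q + 1))
    (hy : y ∈ lenFilt W (q + 1)) (hDx : D x = 0) (hxy : f x + D' y = 0) :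
    ∃ w₁ ∈ lenFilt V (q + 1), ∃ w₂ ∈ lenFilt W (q + 1),
      x + D w₁ ∈ lenFilt V q ∧ y - f w₁ - D' w₂ ∈ lenFilt W q := by
  rw [lenFilt_succ] at hx hy
  obtain ⟨x', hx', ξ, hξ, rfl⟩ := Submodule.mem_sup.mp hx
  obtain ⟨y', hy', η, hη, rfl⟩ := Submodule.mem_sup.mp hy
  have hDξ := hD.isLeadingPart.sub_mem_lenFilt hξ
  have hfξ := hf.isLeadingPart.sub_mem_lenFilt hξ
  have hD'η := hD'.isLeadingPart.sub_mem_lenFilt hη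
  have hAξ : A ξ = 0 := by
    refine eq_zero_of_mem_lenPiece_of_mem_lenFilt (hD.preservesLenPiece _ ξ hξ) ?_
    have h : A ξ = -D x' - (D ξ - A ξ) := by
      rw [map_add] at hDx
      rw [eq_neg_of_add_eq_zero_left hDx]; abel
    rw [h]
    exact sub_mem (neg_mem (hD.preservesLenFilt.mem_lenFilt hx')) hDξ
  have hFB : F ξ + B η = 0 := by
    refine eq_zero_of_mem_lenPiece_of_mem_lenFilt
      (add_mem (hf.preservesLenPiece _ ξ hξ) (hD'.preservesLenPiece _ η hη)) ?_
    have h : F ξ + B η = -f x' - D' y' - (f ξ - F ξ) - (D' η - B η) := by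
      rw [map_add, map_add] at hxy
      rw [← sub_eq_zero, ← hxy]; abel
    rw [h]
    exact sub_mem (sub_mem (sub_mem (neg_mem (hf.preservesLenFilt.mem_lenFilt hx'))
      (hD'.preservesLenFilt.mem_lenFilt hy')) hfξ) hD'η
  obtain ⟨w₁, hw₁, w₂, hw₂, hAw₁, hFBw⟩ := hgr ξ hξ η hη hAξ hFB
  refine ⟨w₁, lenPiece_le_lenFilt le_rfl hw₁, w₂, lenPiece_le_lenFilt le_rfl hw₂, ?_, ?_⟩
  · have h : x' + ξ + D w₁ = x' + (D w₁ - A w₁) := by rw [hAw₁]; abel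
    rw [h]
    exact add_mem hx' (hD.isLeadingPart.sub_mem_lenFilt hw₁)
  · have h : y' + η - f w₁ - D' w₂ = y' - (f w₁ - F w₁) - (D' w₂ - B w₂) := by
      rw [← hFBw]; abel
    rw [h]
    exact sub_mem (sub_mem hy' (hf.isLeadingPart.sub_mem_lenFilt hw₁))
      (hD'.isLeadingPart.sub_mem_lenFilt hw₂)

theorem coneExactOn_lenFilt (hD : IsFilteredWithLeadingPart D A)
    (hD' : IsFilteredWithLeadingPart D' B) (hf : IsFilteredWithLeadingPart f F)
    (hD2 : ∀ x, D (D x) = 0) (hD'2 : ∀ y, D' (D' y) = 0) (hfD : ∀ x, D' (f x) = f (D x))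
    (hf1 : f 1 = 1) (hgr : ∀ n, ConeExactOn A B F (lenPiece V n) (lenPiece W n)) (q : ℕ) :
    ConeExactOn D D' f (lenFilt V q) (lenFilt W q) := by
  induction q with
  | zero =>
    intro x hx y hy _ hxy
    rw [lenFilt_zero] at hx hy
    obtain ⟨r, rfl⟩ := Submodule.mem_one.mp hx
    obtain ⟨s, rfl⟩ := Submodule.mem_one.mp hy
    have hD1 := hD.preservesLenFilt.apply_one_eq_zero hD2
    have hD'1 := hD'.preservesLenFilt.apply_one_eq_zero hD'2
    have hr : r = 0 := by
      simpa [Algebra.algebraMap_eq_smul_one, hf1, hD'1] using hxy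
    refine ⟨algebraMap ℚ _ s, by simp [lenFilt_zero], 0, zero_mem _, ?_, ?_⟩ <;>
      simp [Algebra.algebraMap_eq_smul_one, hr, hD1, hf1]
  | succ q ih =>
    intro x hx y hy hDx hxy
    obtain ⟨w₁, hw₁, w₂, hw₂, hx', hy'⟩ :=
      exists_cone_boundary_sub_mem_lenFilt hD hD' hf (hgr (q + 1)) hx hy hDx hxy
    obtain ⟨a, ha, b, hb, hDa, hfb⟩ := ih _ hx' _ hy' (by rw [map_add, hDx, hD2, add_zero])
      (by rw [map_add, map_sub, map_sub, hD'2, hfD, sub_zero, ← hxy]; abel)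
    refine ⟨a + w₁, add_mem (lenFilt_mono q.le_succ ha) hw₁, b + w₂,
      add_mem (lenFilt_mono q.le_succ hb) hw₂, ?_, ?_⟩
    · rw [map_add, hDa]; abel
    · rw [map_add, map_add, add_add_add_comm, hfb]; abel

theorem coneExactOn_top_of_lenFilt
    (h : ∀ q, ConeExactOn D D' f (lenFilt V q) (lenFilt W q)) : ConeExactOn D D' f ⊤ ⊤ := by
  intro ξ _ η _ hξ hξη
  obtain ⟨q₁, hq₁⟩ := exists_mem_lenFilt ξ
  obtain ⟨q₂, hq₂⟩ := exists_mem_lenFilt η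
  obtain ⟨w₁, -, w₂, -, hw⟩ := h (max q₁ q₂) ξ (lenFilt_mono (le_max_left _ _) hq₁) η
    (lenFilt_mono (le_max_right _ _) hq₂) hξ hξη
  exact ⟨w₁, trivial, w₂, trivial, hw⟩

end FilteredCone

theorem tensor_coalgebra_morphism_quasi_iso_general
    (V W : Type) [AddCommGroup V] [Module ℚ V] [AddCommGroup W] [Module ℚ W]
    -- homological gradings
    (gV : ℤ → Submodule ℚ V) (hgV : (⨆ i : ℤ, gV i) = ⊤)
    (gW : ℤ → Submodule ℚ W) (hgW : (⨆ i : ℤ, gW i) = ⊤)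
    -- the linear parts of the differentials
    (dV : V →ₗ[ℚ] V) (hdV2 : dV ∘ₗ dV = 0)
    (dW : W →ₗ[ℚ] W) (hdW2 : dW ∘ₗ dW = 0)
    -- the linear component `f₀` of `f`, a quasi-isomorphism
    (f0 : V →ₗ[ℚ] W) (hf0chain : dW ∘ₗ f0 = f0 ∘ₗ dV)
    (hf0_surj : ∀ w : W, dW w = 0 → ∃ v z, dV v = 0 ∧ f0 v = w + dW z)
    (hf0_inj : ∀ v : V, dV v = 0 → (∃ w, f0 v = dW w) → ∃ u, v = dV u)
    -- the differentials of the tensor coalgebras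
    (D : TensorAlgebra ℚ V →ₗ[ℚ] TensorAlgebra ℚ V) (hD2 : D ∘ₗ D = 0)
    (D' : TensorAlgebra ℚ W →ₗ[ℚ] TensorAlgebra ℚ W) (hD'2 : D' ∘ₗ D' = 0)
    (hDfilt : ∀ n : ℕ, ∀ x ∈ lenPiece V n, D x ∈ lenFilt V n)
    (hD'filt : ∀ n : ℕ, ∀ y ∈ lenPiece W n, D' y ∈ lenFilt W n)
    -- the word-length preserving component of `D` on `V^{⊗n}` is the tensor
    -- extension of `d_V` (with the Koszul signs of the grading):
    (hDgr : ∀ (n : ℕ) (v : Fin n → V) (deg : Fin n → ℤ),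
      (∀ i, v i ∈ gV (deg i)) →
      D ((List.ofFn fun i => TensorAlgebra.ι ℚ (v i)).prod)
        - ∑ i : Fin n,
            ((-1 : ℚ) ^ (∑ j ∈ Finset.univ.filter (fun j => j < i), deg j).natAbs) •
              (List.ofFn fun j =>
                TensorAlgebra.ι ℚ (if j = i then dV (v j) else v j)).prod
        ∈ lenFilt V (n - 1))
    (hD'gr : ∀ (n : ℕ) (w : Fin n → W) (deg : Fin n → ℤ),
      (∀ i, w i ∈ gW (deg i)) →
      D' ((List.ofFn fun i => TensorAlgebra.ι ℚ (w i)).prod)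
        - ∑ i : Fin n,
            ((-1 : ℚ) ^ (∑ j ∈ Finset.univ.filter (fun j => j < i), deg j).natAbs) •
              (List.ofFn fun j =>
                TensorAlgebra.ι ℚ (if j = i then dW (w j) else w j)).prod
        ∈ lenFilt W (n - 1))
    -- the coalgebra morphism `f`
    (f : TensorAlgebra ℚ V →ₗ[ℚ] TensorAlgebra ℚ W)
    (hfchain : D' ∘ₗ f = f ∘ₗ D)
    (hffilt : ∀ n : ℕ, ∀ x ∈ lenPiece V n, f x ∈ lenFilt W n)
    (hfone : f 1 = 1)
    -- the word-length preserving component of `f` is `f₀^{⊗n}`: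
    (hfgr : ∀ (n : ℕ) (v : Fin n → V),
      f ((List.ofFn fun i => TensorAlgebra.ι ℚ (v i)).prod)
        - (List.ofFn fun i => TensorAlgebra.ι ℚ (f0 (v i))).prod
        ∈ lenFilt W (n - 1)) :
    (∀ y : TensorAlgebra ℚ W, D' y = 0 →
      ∃ x z, D x = 0 ∧ f x = y + D' z) ∧
    (∀ x : TensorAlgebra ℚ V, D x = 0 → (∃ y, f x = D' y) → ∃ u, x = D u) := by
  have hdV (v : V) : dV (dV v) = 0 := LinearMap.congr_fun hdV2 v
  have hdW (w : W) : dW (dW w) = 0 := LinearMap.congr_fun hdW2 w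
  have hDD (x : TensorAlgebra ℚ V) : D (D x) = 0 := LinearMap.congr_fun hD2 x
  have hD'D' (y : TensorAlgebra ℚ W) : D' (D' y) = 0 := LinearMap.congr_fun hD'2 y
  obtain ⟨εV, hεV, hDA⟩ := exists_parity_isLeadingPart gV hgV dV D hDgr
  obtain ⟨εW, hεW, hD'B⟩ := exists_parity_isLeadingPart gW hgW dW D' hD'gr
  obtain ⟨rV⟩ := exists_homologyRetraction hdV hεV
    (anticomm_of_isLeadingPart hdV hεV hDD hDfilt hDA)
  obtain ⟨rW⟩ := exists_homologyRetraction hdW hεW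
    (anticomm_of_isLeadingPart hdW hεW hD'D' hD'filt hD'B)
  have hfF := isLeadingPart_tensorMap hfgr
  have hchain := tensorMap_twistedDer_comm hDA hD'B hfF hD'filt hffilt hfchain
  have hgr := rV.coneExactOn_lenPiece hεV rW hεW (LinearMap.congr_fun hf0chain) hf0_surj
    hf0_inj hchain
  refine ConeExactOn.surj_inj_homology (coneExactOn_top_of_lenFilt <|
    coneExactOn_lenFilt ⟨hDfilt, hDA, preservesLenPiece_twistedDer dV εV⟩
      ⟨hD'filt, hD'B, preservesLenPiece_twistedDer dW εW⟩
      ⟨hffilt, hfF, preservesLenPiece_tensorMap f0⟩ hDD hD'D'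
      (LinearMap.congr_fun hfchain) hfone hgr)

/-- Let `(T^c(V), D)` and `(T^c(W), D')` be differential graded tensor coalgebras
whose (coderivation) differentials have components decreasing the word length, with
linear parts `d_V`, `d_W` preserving `V` resp. `W`, and let
`f : T^c(V) → T^c(W)` be a morphism of differential graded coalgebras written
`f = f₀ + f₁ + ⋯` with `fᵢ((T^c)^r(V)) ⊆ (T^c)^{r-i}(W)`.  If
`f₀ : (V, d_V) → (W, d_W)` is a quasi-isomorphism and `V`, `W` are graded vector
spaces over `ℚ`, then `f` is a quasi-isomorphism.

Word-length pieces are realised inside the tensor algebras, `lenFilt` is the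
word-length filtration, and quasi-isomorphisms are expressed by surjectivity and
injectivity of the induced map on homology classes. -/
theorem tensor_coalgebra_morphism_quasi_iso
    (V W : Type) [AddCommGroup V] [Module ℚ V] [AddCommGroup W] [Module ℚ W]
    -- homological gradings
    (gV : ℤ → Submodule ℚ V) (hgV : (⨆ i : ℤ, gV i) = ⊤)
    (gW : ℤ → Submodule ℚ W) (hgW : (⨆ i : ℤ, gW i) = ⊤)
    -- the linear parts of the differentials
    (dV : V →ₗ[ℚ] V) (hdV2 : dV ∘ₗ dV = 0)
    (dW : W →ₗ[ℚ] W) (hdW2 : dW ∘ₗ dW = 0)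
    (hdVg : ∀ (i : ℤ), ∀ v ∈ gV i, dV v ∈ gV (i - 1))
    (hdWg : ∀ (i : ℤ), ∀ w ∈ gW i, dW w ∈ gW (i - 1))
    -- the linear component `f₀` of `f`, a quasi-isomorphism
    (f0 : V →ₗ[ℚ] W) (hf0chain : dW ∘ₗ f0 = f0 ∘ₗ dV)
    (hf0g : ∀ (i : ℤ), ∀ v ∈ gV i, f0 v ∈ gW i)
    (hf0_surj : ∀ w : W, dW w = 0 → ∃ v z, dV v = 0 ∧ f0 v = w + dW z)
    (hf0_inj : ∀ v : V, dV v = 0 → (∃ w, f0 v = dW w) → ∃ u, v = dV u)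
    -- the differentials of the tensor coalgebras
    (D : TensorAlgebra ℚ V →ₗ[ℚ] TensorAlgebra ℚ V) (hD2 : D ∘ₗ D = 0)
    (D' : TensorAlgebra ℚ W →ₗ[ℚ] TensorAlgebra ℚ W) (hD'2 : D' ∘ₗ D' = 0)
    (hDfilt : ∀ n : ℕ, ∀ x ∈ lenPiece V n, D x ∈ lenFilt V n)
    (hD'filt : ∀ n : ℕ, ∀ y ∈ lenPiece W n, D' y ∈ lenFilt W n)
    (hD1 : ∀ v : V, D (TensorAlgebra.ι ℚ v) = TensorAlgebra.ι ℚ (dV v))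
    (hD'1 : ∀ w : W, D' (TensorAlgebra.ι ℚ w) = TensorAlgebra.ι ℚ (dW w))
    -- the word-length preserving component of `D` on `V^{⊗n}` is the tensor
    -- extension of `d_V` (with the Koszul signs of the grading):
    (hDgr : ∀ (n : ℕ) (v : Fin n → V) (deg : Fin n → ℤ),
      (∀ i, v i ∈ gV (deg i)) →
      D ((List.ofFn fun i => TensorAlgebra.ι ℚ (v i)).prod)
        - ∑ i : Fin n,
            ((-1 : ℚ) ^ (∑ j ∈ Finset.univ.filter (fun j => j < i), deg j).natAbs) •
              (List.ofFn fun j =>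
                TensorAlgebra.ι ℚ (if j = i then dV (v j) else v j)).prod
        ∈ lenFilt V (n - 1))
    (hD'gr : ∀ (n : ℕ) (w : Fin n → W) (deg : Fin n → ℤ),
      (∀ i, w i ∈ gW (deg i)) →
      D' ((List.ofFn fun i => TensorAlgebra.ι ℚ (w i)).prod)
        - ∑ i : Fin n,
            ((-1 : ℚ) ^ (∑ j ∈ Finset.univ.filter (fun j => j < i), deg j).natAbs) •
              (List.ofFn fun j =>
                TensorAlgebra.ι ℚ (if j = i then dW (w j) else w j)).prod
        ∈ lenFilt W (n - 1))
    -- the coalgebra morphism `f`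
    (f : TensorAlgebra ℚ V →ₗ[ℚ] TensorAlgebra ℚ W)
    (hfchain : D' ∘ₗ f = f ∘ₗ D)
    (hffilt : ∀ n : ℕ, ∀ x ∈ lenPiece V n, f x ∈ lenFilt W n)
    (hfone : f 1 = 1)
    (hf1 : ∀ v : V, f (TensorAlgebra.ι ℚ v) = TensorAlgebra.ι ℚ (f0 v))
    -- the word-length preserving component of `f` is `f₀^{⊗n}`:
    (hfgr : ∀ (n : ℕ) (v : Fin n → V),
      f ((List.ofFn fun i => TensorAlgebra.ι ℚ (v i)).prod)
        - (List.ofFn fun i => TensorAlgebra.ι ℚ (f0 (v i))).prod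
        ∈ lenFilt W (n - 1)) :
    (∀ y : TensorAlgebra ℚ W, D' y = 0 →
      ∃ x z, D x = 0 ∧ f x = y + D' z) ∧
    (∀ x : TensorAlgebra ℚ V, D x = 0 → (∃ y, f x = D' y) → ∃ u, x = D u) :=
  tensor_coalgebra_morphism_quasi_iso_general V W gV hgV gW hgW dV hdV2 dW hdW2 f0 hf0chain hf0_surj
    hf0_inj D hD2 D' hD'2 hDfilt hD'filt hDgr hD'gr f hfchain hffilt hfone hfgr
end
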